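/- arXiv:1607.03018 — 4 statements merged into one kernel-verified Lean document; each statement's English description precedes it below -/
import Mathlib

section
/- For every integer n ≥ 2, the number of triangles (3-element sets of pairwise adjacent vertices) in the occurrence graph G_{12}(id_n) of the pattern 12 in the identity permutation id_n equals (n-2)·C(n,3). -/
open Finset

/-- `s` is an occurrence (index set) of the pattern `p` in the permutation `π`:
`s` has `k` elements and, listed increasingly, `π` on `s` is order isomorphic to `p`. -/
def IsOccurrence {k n : ℕ} (p : Equiv.Perm (Fin k)) (π : Equiv.Perm (Fin n))
    (s : Finset (Fin n)) : Prop :=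
  ∃ h : s.card = k, ∀ a b : Fin k,
    π ↑(s.orderIsoOfFin h a) < π ↑(s.orderIsoOfFin h b) ↔ p a < p b

/-- The occurrence set `V_p(π)` of all occurrence index sets of `p` in `π`. -/
def OccSet {k n : ℕ} (p : Equiv.Perm (Fin k)) (π : Equiv.Perm (Fin n)) :
    Set (Finset (Fin n)) :=
  {s | IsOccurrence p π s}

/-- The occurrence graph `G_p(π)`: vertices are the occurrences of `p` in `π`,
two occurrences adjacent iff they differ in exactly one element. -/
def OccGraph {k n : ℕ} (p : Equiv.Perm (Fin k)) (π : Equiv.Perm (Fin n)) :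
    SimpleGraph {s : Finset (Fin n) // IsOccurrence p π s} where
  Adj u v := (u.val \ v.val).card = 1 ∧ (v.val \ u.val).card = 1
  symm := ⟨fun u v h => ⟨h.2, h.1⟩⟩
  loopless := ⟨fun u h => by simp at h⟩

/-! Occurrences of `12` in `id_n` are exactly the `2`-subsets of `{1, …, n}`, and two of them are
adjacent iff they share exactly one element. Three `2`-sets pairwise sharing one element either
are the three pairs inside a `3`-set `T`, or all contain a common point `x` and have the form
`{x, a}, {x, b}, {x, c}`. There are `C(n, 3)` triangles of the first kind and `(n - 3) · C(n, 3)`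
of the second (choose `{a, b, c}`, then `x` outside it), which add up to `(n - 2) · C(n, 3)`. -/

def exchangeGraph (α : Type*) [DecidableEq α] : SimpleGraph (Finset α) where
  Adj u v := #(u \ v) = 1 ∧ #(v \ u) = 1
  symm := ⟨fun _ _ h => ⟨h.2, h.1⟩⟩
  loopless := ⟨fun _ h => by simp at h⟩

theorem mem_occSet_refl_iff {k n : ℕ} (s : Finset (Fin n)) :
    s ∈ OccSet (Equiv.refl (Fin k)) (Equiv.refl (Fin n)) ↔ #s = k :=
  ⟨fun ⟨h, _⟩ => h, fun h => ⟨h, fun a b => by simp⟩⟩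

theorem card_isNClique_induce {β : Type*} (G : SimpleGraph β) (s : Set β) (m : ℕ) :
    Nat.card {t : Finset s // (G.induce s).IsNClique m t} =
      Nat.card {t : Finset β // (∀ x ∈ t, x ∈ s) ∧ G.IsNClique m t} :=
  Nat.card_congr <| ((Equiv.finsetSubtypeComm (· ∈ s)).subtypeEquiv fun t =>
    G.isNClique_induce_iff s t m).trans (Equiv.subtypeSubtypeEquivSubtypeInter _ _)

theorem Nat.choose_three_add_choose_three_mul (n : ℕ) :
    n.choose 3 + n.choose 3 * (n - 3) = (n - 2) * n.choose 3 := by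
  rcases lt_or_ge n 3 with hn | hn
  · simp [Nat.choose_eq_zero_of_lt hn]
  · rw [show n - 2 = n - 3 + 1 by omega]
    ring

section PairTriangles

variable {α : Type*} [DecidableEq α]

theorem Finset.exists_eq_pair_of_mem {s : Finset α} {a : α} (hs : #s = 2) (ha : a ∈ s) :
    ∃ b, b ≠ a ∧ s = {a, b} := by
  obtain ⟨b, hb⟩ := card_eq_one.1 (by rw [card_erase_of_mem ha, hs] : #(s.erase a) = 1)
  refine ⟨b, ne_of_mem_erase (hb ▸ mem_singleton_self b), ?_⟩
  rw [← insert_erase ha, hb]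

theorem Finset.pair_inter_pair {x a b : α} (hab : a ≠ b) :
    ({x, a} ∩ {x, b} : Finset α) = {x} := by
  rw [← insert_inter_distrib, singleton_inter_of_notMem (by simpa using hab)]
  rfl

theorem Finset.eq_of_pair_eq_pair {x a b : α} (ha : a ≠ x) (h : ({x, a} : Finset α) = {x, b}) :
    a = b := by
  have : a ∈ ({x, b} : Finset α) := h ▸ mem_insert_of_mem (mem_singleton_self a)
  simpa [ha] using this

theorem Finset.card_inter_eq_one_of_subset {u v T : Finset α} (hT : #T = 3) (hu : u ⊆ T)
    (hv : v ⊆ T) (hu2 : #u = 2) (hv2 : #v = 2) (huv : u ≠ v) : #(u ∩ v) = 1 := by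
  have hunion := card_union_add_card_inter u v
  have hle : #(u ∪ v) ≤ 3 := hT ▸ card_le_card (union_subset hu hv)
  have hlt : #(u ∩ v) < 2 := by
    by_contra! h
    exact huv <| ((eq_of_subset_of_card_le inter_subset_left (hu2 ▸ h)).symm.trans
      (eq_of_subset_of_card_le inter_subset_right (hv2 ▸ h)))
  omega

theorem Finset.eq_pair_of_card_inter_eq_one {p a b : α} {w : Finset α} (hab : a ≠ b)
    (hw : #w = 2) (hpw : p ∉ w) (ha : #({p, a} ∩ w) = 1) (hb : #({p, b} ∩ w) = 1) :
    w = {a, b} := by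
  have haw : a ∈ w := by
    by_contra haw
    simp [insert_inter_of_notMem, hpw, haw] at ha
  have hbw : b ∈ w := by
    by_contra hbw
    simp [insert_inter_of_notMem, hpw, hbw] at hb
  exact (eq_of_subset_of_card_le (by simp [insert_subset_iff, haw, hbw])
    (by rw [hw, card_pair hab])).symm

theorem exchangeGraph_adj_iff_card_inter {u v : Finset α} (hu : #u = 2) (hv : #v = 2) :
    (exchangeGraph α).Adj u v ↔ #(u ∩ v) = 1 := by
  have hu' := card_sdiff_add_card_inter u v
  have hv' := card_sdiff_add_card_inter v u
  rw [inter_comm] at hv'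
  change #(u \ v) = 1 ∧ #(v \ u) = 1 ↔ _
  omega

def IsPairTriangle (F : Finset (Finset α)) : Prop :=
  (∀ s ∈ F, #s = 2) ∧ (exchangeGraph α).IsNClique 3 F

def starFamily (x : α) (S : Finset α) : Finset (Finset α) :=
  S.image fun a => {x, a}

theorem isPairTriangle_powersetCard {T : Finset α} (hT : #T = 3) :
    IsPairTriangle (T.powersetCard 2) := by
  refine ⟨fun s hs => (mem_powersetCard.1 hs).2, fun u hu v hv huv => ?_, ?_⟩
  · rw [mem_coe, mem_powersetCard] at hu hv
    rw [exchangeGraph_adj_iff_card_inter hu.2 hv.2]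
    exact card_inter_eq_one_of_subset hT hu.1 hv.1 hu.2 hv.2 huv
  · rw [card_powersetCard, hT]
    rfl

theorem isPairTriangle_starFamily {x : α} {S : Finset α} (hx : x ∉ S) (hS : #S = 3) :
    IsPairTriangle (starFamily x S) := by
  have hxa : ∀ a ∈ S, a ≠ x := fun a ha h => hx (h ▸ ha)
  refine ⟨?_, ?_, ?_⟩
  · simp only [starFamily, mem_image, forall_exists_index, and_imp, forall_apply_eq_imp_iff₂]
    exact fun a ha => card_pair (hxa a ha).symm
  · simp only [starFamily, coe_image]
    rintro _ ⟨a, ha, rfl⟩ _ ⟨b, hb, rfl⟩ hab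
    rw [exchangeGraph_adj_iff_card_inter (card_pair (hxa a ha).symm) (card_pair (hxa b hb).symm),
      pair_inter_pair (x := x) (ne_of_apply_ne (fun a => ({x, a} : Finset α)) hab),
      card_singleton]
  · rw [starFamily, card_image_of_injOn fun a ha b _ h => eq_of_pair_eq_pair (hxa a ha) h, hS]

theorem IsPairTriangle.exists_eq {F : Finset (Finset α)} (hF : IsPairTriangle F) :
    (∃ T, #T = 3 ∧ T.powersetCard 2 = F) ∨ ∃ x S, x ∉ S ∧ #S = 3 ∧ starFamily x S = F := by
  obtain ⟨hF2, hF⟩ := hF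
  obtain ⟨u, v, w, huv, huw, hvw, rfl⟩ := SimpleGraph.is3Clique_iff.1 hF
  have hu : #u = 2 := hF2 u (by simp)
  have hv : #v = 2 := hF2 v (by simp)
  have hw : #w = 2 := hF2 w (by simp)
  have huv₁ := (exchangeGraph_adj_iff_card_inter hu hv).1 huv
  have huw₁ := (exchangeGraph_adj_iff_card_inter hu hw).1 huw
  have hvw₁ := (exchangeGraph_adj_iff_card_inter hv hw).1 hvw
  obtain ⟨p, hp⟩ := card_eq_one.1 huv₁
  have hpuv : p ∈ u ∩ v := hp ▸ mem_singleton_self p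
  obtain ⟨a, hap, rfl⟩ := exists_eq_pair_of_mem hu (mem_inter.1 hpuv).1
  obtain ⟨b, hbp, rfl⟩ := exists_eq_pair_of_mem hv (mem_inter.1 hpuv).2
  have hab : a ≠ b := fun h => huv.ne (by rw [h])
  by_cases hpw : p ∈ w
  · obtain ⟨c, hcp, rfl⟩ := exists_eq_pair_of_mem hw hpw
    have hac : a ≠ c := fun h => huw.ne (by rw [h])
    have hbc : b ≠ c := fun h => hvw.ne (by rw [h])
    refine .inr ⟨p, {a, b, c}, ?_, card_eq_three.2 ⟨a, b, c, hab, hac, hbc, rfl⟩, ?_⟩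
    · simp [hap.symm, hbp.symm, hcp.symm]
    · simp [starFamily]
  · obtain rfl := eq_pair_of_card_inter_eq_one hab hw hpw huw₁ hvw₁
    have hT : #({p, a, b} : Finset α) = 3 :=
      card_eq_three.2 ⟨p, a, b, hap.symm, hbp.symm, hab, rfl⟩
    refine .inl ⟨{p, a, b}, hT, (eq_of_subset_of_card_le ?_ ?_).symm⟩
    · simp [insert_subset_iff, hap.symm, hbp.symm, hab]
    · rw [hF.card_eq, card_powersetCard, hT]
      rfl

theorem isPairTriangle_iff {F : Finset (Finset α)} : IsPairTriangle F ↔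
    (∃ T, #T = 3 ∧ T.powersetCard 2 = F) ∨ ∃ x S, x ∉ S ∧ #S = 3 ∧ starFamily x S = F := by
  refine ⟨IsPairTriangle.exists_eq, ?_⟩
  rintro (⟨T, hT, rfl⟩ | ⟨x, S, hx, hS, rfl⟩)
  · exact isPairTriangle_powersetCard hT
  · exact isPairTriangle_starFamily hx hS

theorem eq_of_forall_mem_starFamily {x y : α} {S : Finset α} (hS : 1 < #S)
    (hy : ∀ s ∈ starFamily x S, y ∈ s) : y = x := by
  obtain ⟨a, ha, b, hb, hab⟩ := one_lt_card.1 hS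
  have := mem_inter.2 ⟨hy _ (mem_image_of_mem _ ha), hy _ (mem_image_of_mem _ hb)⟩
  rwa [pair_inter_pair hab, mem_singleton] at this

theorem starFamily_inj {x y : α} {S S' : Finset α} (hy : y ∉ S') (hS : 1 < #S)
    (hcard : #S = #S') (h : starFamily x S = starFamily y S') : x = y ∧ S = S' := by
  obtain rfl : y = x := eq_of_forall_mem_starFamily hS fun s hs => by
    obtain ⟨a, -, rfl⟩ := mem_image.1 (h ▸ hs)
    exact mem_insert_self y {a}
  refine ⟨rfl, eq_of_subset_of_card_le (fun a ha => ?_) hcard.ge⟩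
  have hya : ({y, a} : Finset α) ∈ starFamily y S' := h ▸ mem_image_of_mem _ ha
  obtain ⟨b, hb, hba⟩ := mem_image.1 hya
  rwa [← eq_of_pair_eq_pair (ne_of_mem_of_not_mem hb hy) hba]

theorem starFamily_ne_powersetCard {x : α} {S T : Finset α} (hT : #T = 3) :
    starFamily x S ≠ T.powersetCard 2 := by
  intro h
  obtain ⟨s, hsT, hs⟩ := exists_subset_card_eq (s := T.erase x) (n := 2)
    (by have := pred_card_le_card_erase (s := T) (a := x); omega)
  obtain ⟨a, -, rfl⟩ := mem_image.1 (h ▸ mem_powersetCard.2 ⟨hsT.trans (erase_subset x T), hs⟩)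
  exact notMem_erase x T (hsT (mem_insert_self x {a}))

end PairTriangles

theorem card_isPairTriangle {α : Type*} [DecidableEq α] [Fintype α] :
    Nat.card {F : Finset (Finset α) // IsPairTriangle F} =
      (Fintype.card α - 2) * (Fintype.card α).choose 3 := by
  classical
  let triples : Finset (Finset α) := powersetCard 3 univ
  let starData : Finset (Σ _ : Finset α, α) := triples.sigma fun S => Sᶜ
  have hsplit : univ.filter IsPairTriangle =
      triples.image (powersetCard 2) ∪ starData.image fun p => starFamily p.2 p.1 := by
    ext F
    simp only [triples, starData, isPairTriangle_iff, mem_filter, mem_univ, true_and, mem_union,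
      mem_image, mem_powersetCard, subset_univ, mem_sigma, mem_compl, Sigma.exists]
    grind
  have hdisj : Disjoint (triples.image (powersetCard 2))
      (starData.image fun p => starFamily p.2 p.1) := by
    simp only [disjoint_left, mem_image, not_exists, not_and]
    rintro _ ⟨T, hT, rfl⟩ p - h
    exact starFamily_ne_powersetCard (mem_powersetCard.1 hT).2 h
  have htri : Set.InjOn (powersetCard 2) (triples : Set (Finset α)) := by
    intro T hT T' hT'
    exact powersetCard_injOn two_ne_zero (by norm_num) (mem_powersetCard.1 hT).2
      (mem_powersetCard.1 hT').2
  have hstar : Set.InjOn (fun p : Σ _ : Finset α, α => starFamily p.2 p.1) starData := by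
    rintro ⟨S, x⟩ hp ⟨S', x'⟩ hp' h
    simp only [starData, triples, mem_coe, mem_sigma, mem_powersetCard, subset_univ, true_and,
      mem_compl] at hp hp'
    obtain ⟨rfl, rfl⟩ := starFamily_inj hp'.2 (by omega) (hp.1.trans hp'.1.symm) h
    rfl
  rw [Nat.card_eq_fintype_card, Fintype.card_subtype, hsplit, card_union_of_disjoint hdisj,
    card_image_of_injOn htri, card_image_of_injOn hstar, card_sigma,
    sum_congr rfl fun S hS => by rw [card_compl, (mem_powersetCard.1 hS).2], sum_const,
    card_powersetCard, card_univ, smul_eq_mul, Nat.choose_three_add_choose_three_mul]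

theorem card_triangles_occGraph_id_general (n : ℕ) :
    Nat.card {t : Finset {s : Finset (Fin n) //
        IsOccurrence (Equiv.refl (Fin 2)) (Equiv.refl (Fin n)) s} //
        (OccGraph (Equiv.refl (Fin 2)) (Equiv.refl (Fin n))).IsNClique 3 t} =
      (n - 2) * n.choose 3 := by
  -- `OccGraph p π` is definitionally `(exchangeGraph (Fin n)).induce (OccSet p π)`.
  refine (card_isNClique_induce (exchangeGraph (Fin n)) (OccSet _ _) 3).trans ?_
  simp only [mem_occSet_refl_iff]
  exact card_isPairTriangle.trans (by rw [Fintype.card_fin])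

theorem card_triangles_occGraph_id (n : ℕ) (hn : 2 ≤ n) :
    Nat.card {t : Finset {s : Finset (Fin n) //
        IsOccurrence (Equiv.refl (Fin 2)) (Equiv.refl (Fin n)) s} //
        (OccGraph (Equiv.refl (Fin 2)) (Equiv.refl (Fin n))).IsNClique 3 t} =
      (n - 2) * n.choose 3 :=
  card_triangles_occGraph_id_general n
end

section
/- For every integer n > 0 and every integer k > 3, the number of cliques of size k in the occurrence graph G_{12}(id_n) of the pattern 12 in the identity permutation id_n equals (k+1)·C(n,k+1) = n·C(n-1,k). -/
/-!
The occurrences of `12` in `id_n` are exactly the 2-subsets of `Fin n`, i.e. the edges of `K_n`,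
and two of them are adjacent iff they share an endpoint. Three pairwise intersecting edges
without a common endpoint form a triangle, which no fourth edge meets in one point each, so a
clique of `k > 3` edges is a star: a centre `x` with `k` leaves among the other `n - 1` points.
A star with at least two leaves determines its centre and leaves, so there are `n * C(n-1, k)`
such cliques.
-/

open Finset

namespace Finset

variable {α : Type*} [DecidableEq α] {x a b : α} {w : Finset α}

lemma exists_eq_pair_of_mem_s4 (hw : #w = 2) (hx : x ∈ w) : ∃ a, x ≠ a ∧ w = {x, a} := by
  obtain ⟨p, q, hpq, rfl⟩ := card_eq_two.1 hw
  rcases mem_insert.1 hx with rfl | hx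
  · exact ⟨q, hpq, rfl⟩
  · rw [mem_singleton.1 hx]
    exact ⟨p, hpq.symm, pair_comm _ _⟩

lemma eq_pair_of_mem (hw : #w = 2) (ha : a ∈ w) (hb : b ∈ w) (hab : a ≠ b) : w = {a, b} :=
  (eq_of_subset_of_card_le (insert_subset ha (singleton_subset_iff.2 hb))
    (by rw [hw, card_pair hab])).symm

lemma mem_of_card_pair_inter_eq_one (h : #({x, a} ∩ w) = 1) (hx : x ∉ w) : a ∈ w := by
  obtain ⟨c, hc⟩ := card_pos.1 (h ▸ Nat.one_pos)
  obtain ⟨hc, hcw⟩ := mem_inter.1 hc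
  rcases mem_insert.1 hc with rfl | hc
  · exact absurd hcw hx
  · rwa [← mem_singleton.1 hc]

lemma eq_of_pair_eq_pair_s4 {y z : α} (hxy : y ≠ x) (h : ({x, y} : Finset α) = {x, z}) :
    y = z := by
  have : y ∈ ({x, z} : Finset α) := h ▸ mem_insert_of_mem (mem_singleton_self y)
  simpa [hxy] using this

variable {𝒜 : Finset (Finset α)}

lemma eq_pair_of_notMem (hcard : ∀ u ∈ 𝒜, #u = 2)
    (hinter : (𝒜 : Set (Finset α)).Pairwise fun u v => #(u ∩ v) = 1)
    (hxa : {x, a} ∈ 𝒜) (hxb : {x, b} ∈ 𝒜) (hab : a ≠ b) (hw : w ∈ 𝒜) (hx : x ∉ w) :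
    w = {a, b} := by
  have hmem {c} (hxc : {x, c} ∈ 𝒜) : c ∈ w :=
    mem_of_card_pair_inter_eq_one (hinter hxc hw (by rintro rfl; simp at hx)) hx
  exact eq_pair_of_mem (hcard w hw) (hmem hxa) (hmem hxb) hab

lemma exists_forall_mem_of_pairwise_card_inter_eq_one (hcard : ∀ u ∈ 𝒜, #u = 2)
    (hinter : (𝒜 : Set (Finset α)).Pairwise fun u v => #(u ∩ v) = 1) (h𝒜 : 3 < #𝒜) :
    ∃ x, ∀ u ∈ 𝒜, x ∈ u := by
  obtain ⟨u, hu, v, hv, huv⟩ := one_lt_card.1 (by omega : 1 < #𝒜)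
  obtain ⟨x, hx⟩ := card_eq_one.1 (hinter hu hv huv)
  have hxuv : x ∈ u ∩ v := hx ▸ mem_singleton_self x
  obtain ⟨a, hxa, rfl⟩ := exists_eq_pair_of_mem_s4 (hcard u hu) (mem_inter.1 hxuv).1
  obtain ⟨b, hxb, rfl⟩ := exists_eq_pair_of_mem_s4 (hcard v hv) (mem_inter.1 hxuv).2
  have hab : a ≠ b := by rintro rfl; exact huv rfl
  refine ⟨x, fun w hw => by_contra fun hxw => ?_⟩
  have hab𝒜 : {a, b} ∈ 𝒜 := eq_pair_of_notMem hcard hinter hu hv hab hw hxw ▸ hw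
  have htriangle : 𝒜 ⊆ {{a, b}, {x, b}, {x, a}} := by
    intro y hy
    simp only [mem_insert, mem_singleton]
    by_cases hy_x : x ∉ y
    · exact .inl (eq_pair_of_notMem hcard hinter hu hv hab hy hy_x)
    by_cases hy_a : a ∉ y
    · exact .inr (.inl (eq_pair_of_notMem hcard hinter (pair_comm x a ▸ hu) hab𝒜 hxb hy hy_a))
    by_cases hy_b : b ∉ y
    · exact .inr (.inr (eq_pair_of_notMem hcard hinter (pair_comm x b ▸ hv)
        (pair_comm a b ▸ hab𝒜) hxa hy hy_b))
    have hxab := card_le_card (insert_subset (not_not.1 hy_x) (insert_subset (not_not.1 hy_a)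
      (singleton_subset_iff.2 (not_not.1 hy_b))))
    rw [hcard y hy, card_insert_of_notMem (by simp [hxa, hxb]), card_pair hab] at hxab
    omega
  have := (card_le_card htriangle).trans card_le_three
  omega

lemma card_sigma_powersetCard_univ_erase {α : Type*} [Fintype α] [DecidableEq α] (k : ℕ) :
    #(univ.sigma fun x : α => powersetCard k (univ.erase x)) =
      Fintype.card α * (Fintype.card α - 1).choose k := by
  simp [card_sigma, card_powersetCard, card_erase_of_mem]

end Finset

lemma Nat.add_one_mul_choose_add_one (n k : ℕ) :
    (k + 1) * n.choose (k + 1) = n * (n - 1).choose k := by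
  rcases n with _ | n
  · simp
  · rw [Nat.add_sub_cancel, Nat.add_one_mul_choose_eq, mul_comm]

lemma isOccurrence_refl_iff {k n : ℕ} {s : Finset (Fin n)} :
    IsOccurrence (Equiv.refl (Fin k)) (Equiv.refl (Fin n)) s ↔ #s = k :=
  ⟨fun ⟨h, _⟩ => h,
    fun h => ⟨h, fun _ _ => Subtype.coe_lt_coe.trans (OrderIso.lt_iff_lt _)⟩⟩

instance {k n : ℕ} : DecidablePred (IsOccurrence (Equiv.refl (Fin k)) (Equiv.refl (Fin n))) :=
  fun _ => decidable_of_iff _ isOccurrence_refl_iff.symm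

abbrev Occ₁₂ (n : ℕ) :=
  {s : Finset (Fin n) // IsOccurrence (Equiv.refl (Fin 2)) (Equiv.refl (Fin n)) s}

abbrev occGraph₁₂ (n : ℕ) : SimpleGraph (Occ₁₂ n) :=
  OccGraph (Equiv.refl (Fin 2)) (Equiv.refl (Fin n))

namespace Occ₁₂

variable {n k : ℕ}

lemma card_val (v : Occ₁₂ n) : #v.1 = 2 := isOccurrence_refl_iff.1 v.2

lemma adj_iff {u v : Occ₁₂ n} : (occGraph₁₂ n).Adj u v ↔ #(u.1 ∩ v.1) = 1 := by
  have huv := card_sdiff_add_card_inter u.1 v.1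
  have hvu := card_sdiff_add_card_inter v.1 u.1
  rw [inter_comm, card_val] at hvu
  rw [card_val] at huv
  show _ ∧ _ ↔ _
  omega

def star (x : Fin n) (S : Finset (Fin n)) : Finset (Occ₁₂ n) :=
  (S.image fun y => {x, y}).subtype _

lemma mem_star {x : Fin n} {S : Finset (Fin n)} {v : Occ₁₂ n} :
    v ∈ star x S ↔ ∃ y ∈ S, {x, y} = v.1 := by
  simp [star]

variable {x x' : Fin n} {S S' : Finset (Fin n)}

lemma card_star (hx : x ∉ S) : #(star x S) = #S := by
  have hpair : ∀ y ∈ S, #({x, y} : Finset (Fin n)) = 2 := fun y hy =>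
    card_pair fun h => hx (h ▸ hy)
  rw [star, card_subtype, filter_true_of_mem fun s hs => ?_]
  · exact card_image_of_injOn fun y hy z _ hyz =>
      eq_of_pair_eq_pair_s4 (ne_of_mem_of_not_mem hy hx) hyz
  · obtain ⟨y, hy, rfl⟩ := mem_image.1 hs
    exact isOccurrence_refl_iff.2 (hpair y hy)

lemma isNClique_star (hx : x ∉ S) : (occGraph₁₂ n).IsNClique #S (star x S) := by
  refine ⟨fun u hu v hv huv => adj_iff.2 ?_, card_star hx⟩
  obtain ⟨y, -, hyu⟩ := mem_star.1 hu
  obtain ⟨z, -, hzv⟩ := mem_star.1 hv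
  have hyz : y ≠ z := by rintro rfl; exact huv (Subtype.ext (hyu.symm.trans hzv))
  rw [← hyu, ← hzv, ← insert_inter_distrib, singleton_inter_of_notMem (by simpa using hyz)]
  rfl

lemma pair_mem_star (hx : x ∉ S) {y : Fin n} (hy : y ∈ S) :
    (⟨{x, y}, isOccurrence_refl_iff.2 (card_pair fun h => hx (h ▸ hy))⟩ : Occ₁₂ n) ∈
      star x S :=
  mem_star.2 ⟨y, hy, rfl⟩

lemma star_injective (hx : x ∉ S) (hx' : x' ∉ S') (hS : 1 < #S) (h : star x S = star x' S') :
    x = x' ∧ S = S' := by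
  have hleaf : ∀ y ∈ S, ∃ z ∈ S', ({x', z} : Finset (Fin n)) = {x, y} := fun y hy =>
    mem_star.1 (h ▸ pair_mem_star hx hy)
  have hxx' : x = x' := by
    by_contra hne
    have hS' : S ⊆ {x'} := fun y hy => by
      obtain ⟨z, -, hz⟩ := hleaf y hy
      have : x' ∈ ({x, y} : Finset (Fin n)) := hz ▸ mem_insert_self x' {z}
      simpa [Ne.symm hne, eq_comm] using this
    have := card_le_card hS'
    simp at this
    omega
  subst hxx'
  refine ⟨rfl, eq_of_subset_of_card_le (fun y hy => ?_) ?_⟩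
  · obtain ⟨z, hz, hzy⟩ := hleaf y hy
    exact eq_of_pair_eq_pair_s4 (ne_of_mem_of_not_mem hy hx) hzy.symm ▸ hz
  · rw [← card_star hx, ← card_star hx', h]

lemma exists_eq_star_of_isNClique {t : Finset (Occ₁₂ n)} (hk : 3 < k)
    (ht : (occGraph₁₂ n).IsNClique k t) : ∃ x S, x ∉ S ∧ #S = k ∧ star x S = t := by
  have hcard : ∀ u ∈ t.map (.subtype _), #u = 2 := fun u hu => by
    obtain ⟨v, -, rfl⟩ := mem_map.1 hu
    exact card_val v
  have hinter : (t.map (.subtype _) : Set (Finset (Fin n))).Pairwise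
      fun u v => #(u ∩ v) = 1 := fun u hu v hv huv => by
    obtain ⟨u, hu', rfl⟩ := mem_map.1 hu
    obtain ⟨v, hv', rfl⟩ := mem_map.1 hv
    exact adj_iff.1 (ht.isClique hu' hv' fun h => huv (h ▸ rfl))
  obtain ⟨x, hx⟩ := exists_forall_mem_of_pairwise_card_inter_eq_one hcard hinter
    (by simpa [ht.card_eq] using hk)
  set S := t.biUnion fun v => v.1.erase x
  have hxS : x ∉ S := by simp [S]
  have htS : t ⊆ star x S := fun v hv => by
    obtain ⟨y, hxy, hv'⟩ := exists_eq_pair_of_mem_s4 (card_val v) (hx v.1 (mem_map_of_mem _ hv))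
    exact mem_star.2 ⟨y, mem_biUnion.2 ⟨v, hv, by simp [hv', hxy.symm]⟩, hv'.symm⟩
  have hSt : #S ≤ k := by
    simpa [ht.card_eq] using card_biUnion_le_card_mul t _ 1 fun v hv => by
      rw [card_erase_of_mem (hx v.1 (mem_map_of_mem _ hv)), card_val]
  have htS' : k ≤ #S := by simpa [card_star hxS, ht.card_eq] using card_le_card htS
  have hSk : #S = k := le_antisymm hSt htS'
  refine ⟨x, S, hxS, hSk, (eq_of_subset_of_card_le htS ?_).symm⟩
  rw [card_star hxS, hSk, ht.card_eq]

lemma card_isNClique_eq_card_sigma (hk : 3 < k) :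
    Nat.card {t // (occGraph₁₂ n).IsNClique k t} =
      #(univ.sigma fun x : Fin n => powersetCard k (univ.erase x)) := by
  classical
  have hstar {p : Σ _ : Fin n, Finset (Fin n)}
      (hp : p ∈ univ.sigma fun x => powersetCard k (univ.erase x)) :
      p.1 ∉ p.2 ∧ #p.2 = k := by
    simp only [mem_sigma, mem_univ, mem_powersetCard, subset_erase, true_and] at hp
    exact ⟨hp.1.2, hp.2⟩
  rw [Nat.card_eq_fintype_card, Fintype.card_subtype]
  refine (card_nbij (fun p => star p.1 p.2) (fun p hp => ?_) (fun p hp q hq hpq => ?_)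
    (fun t ht => ?_)).symm
  · obtain ⟨hx, hS⟩ := hstar hp
    simpa [← hS] using isNClique_star hx
  · obtain ⟨hx, hS⟩ := hstar hp
    obtain ⟨hy, -⟩ := hstar hq
    obtain ⟨h1, h2⟩ := star_injective hx hy (by omega) hpq
    exact Sigma.ext h1 (heq_of_eq h2)
  · obtain ⟨x, S, hx, hS, rfl⟩ := exists_eq_star_of_isNClique hk (mem_filter.1 ht).2
    exact ⟨⟨x, S⟩, by simp [mem_powersetCard, subset_erase, hx, hS], rfl⟩

end Occ₁₂

theorem card_cliques_occGraph_id_general (n k : ℕ) (hk : 3 < k) :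
    Nat.card {t : Finset {s : Finset (Fin n) //
        IsOccurrence (Equiv.refl (Fin 2)) (Equiv.refl (Fin n)) s} //
        (OccGraph (Equiv.refl (Fin 2)) (Equiv.refl (Fin n))).IsNClique k t} =
      (k + 1) * n.choose (k + 1) ∧
    (k + 1) * n.choose (k + 1) = n * (n - 1).choose k := by
  refine ⟨?_, Nat.add_one_mul_choose_add_one n k⟩
  rw [Occ₁₂.card_isNClique_eq_card_sigma hk, card_sigma_powersetCard_univ_erase,
    Fintype.card_fin, Nat.add_one_mul_choose_add_one]

theorem card_cliques_occGraph_id (n k : ℕ) (hn : 0 < n) (hk : 3 < k) :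
    Nat.card {t : Finset {s : Finset (Fin n) //
        IsOccurrence (Equiv.refl (Fin 2)) (Equiv.refl (Fin n)) s} //
        (OccGraph (Equiv.refl (Fin 2)) (Equiv.refl (Fin n))).IsNClique k t} =
      (k + 1) * n.choose (k + 1) ∧
    (k + 1) * n.choose (k + 1) = n * (n - 1).choose k :=
  card_cliques_occGraph_id_general n k hk
end

section
/- If a permutation π contains any of the patterns 123, 1432 or 3214, then the occurrence graph G_{12}(π) of the pattern 12 in π contains a triangle (three pairwise adjacent vertices). -/
open Finset

/-- `σ` contains the pattern `π` (there is an occurrence of `π` in `σ`,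
given by a strictly increasing index injection). -/
def PermContains {m n : ℕ} (σ : Equiv.Perm (Fin n)) (π : Equiv.Perm (Fin m)) : Prop :=
  ∃ j : Fin m → Fin n, StrictMono j ∧ ∀ a b : Fin m, σ (j a) < σ (j b) ↔ π a < π b

/-- The permutation 1432 (0-indexed values). -/
def perm1432 : Equiv.Perm (Fin 4) := ⟨![0, 3, 2, 1], ![0, 3, 2, 1], by decide, by decide⟩

/-- The permutation 3214 (0-indexed values). -/
def perm3214 : Equiv.Perm (Fin 4) := ⟨![2, 1, 0, 3], ![2, 1, 0, 3], by decide, by decide⟩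

/-- The permutation 2143 (0-indexed values). -/
def perm2143 : Equiv.Perm (Fin 4) := ⟨![1, 0, 3, 2], ![1, 0, 3, 2], by decide, by decide⟩

/-
Occurrences of 12 in `π` are the pairs `{i, j}` with `i < j` and `π i < π j`, and two such pairs
are adjacent exactly when they share one index. So a triangle is either the three pairs of an
increasing triple (an occurrence of 123), or three pairs through a common index. In an occurrence
of 1432 the `1` lies below and to the left of each of the other three entries; in an occurrence
of 3214 the `4` lies above and to the right of each of the other three.
-/

lemma Finset.card_pair_sdiff_pair {α : Type*} [DecidableEq α] {x a b : α} (hxa : x ≠ a)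
    (hab : a ≠ b) : (({x, a} : Finset α) \ {x, b}).card = 1 := by
  rw [card_eq_one]
  exact ⟨a, by ext; simp only [mem_sdiff, mem_insert, mem_singleton]; grind⟩

lemma isOccurrence_refl_two_pair {n : ℕ} {π : Equiv.Perm (Fin n)} {i j : Fin n} (hij : i < j)
    (hπ : π i < π j) : IsOccurrence (Equiv.refl (Fin 2)) π {i, j} := by
  have hcard : ({i, j} : Finset (Fin n)).card = 2 := card_pair hij.ne
  refine ⟨hcard, ?_⟩
  have h0 : (({i, j} : Finset (Fin n)).orderIsoOfFin hcard 0 : Fin n) = i := by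
    rw [coe_orderIsoOfFin_apply]
    exact (orderEmbOfFin_zero hcard two_pos).trans (by simp [hij.le])
  have h1 : (({i, j} : Finset (Fin n)).orderIsoOfFin hcard 1 : Fin n) = j := by
    rw [coe_orderIsoOfFin_apply]
    exact (orderEmbOfFin_last hcard two_pos).trans (by simp [hij.le])
  intro a b
  fin_cases a <;> fin_cases b <;> simp [h0, h1, hπ, hπ.not_gt]

lemma isOccurrence_refl_two_image_pair {m n : ℕ} {π : Equiv.Perm (Fin n)}
    {p : Equiv.Perm (Fin m)} {j : Fin m → Fin n} (hj : StrictMono j)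
    (hp : ∀ a b : Fin m, π (j a) < π (j b) ↔ p a < p b) (a b : Fin m) (hab : a < b)
    (hpab : p a < p b) : IsOccurrence (Equiv.refl (Fin 2)) π {j a, j b} :=
  isOccurrence_refl_two_pair (hj hab) ((hp a b).2 hpab)

section Triangles

variable {k n : ℕ} {p : Equiv.Perm (Fin k)} {π : Equiv.Perm (Fin n)}

lemma occGraph_adj_of_pairs {x a b : Fin n} (hxa : x ≠ a) (hxb : x ≠ b) (hab : a ≠ b)
    {u v : {s : Finset (Fin n) // IsOccurrence p π s}} (hu : u.val = {x, a})
    (hv : v.val = {x, b}) : (OccGraph p π).Adj u v := by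
  change (u.val \ v.val).card = 1 ∧ (v.val \ u.val).card = 1
  rw [hu, hv]
  exact ⟨card_pair_sdiff_pair hxa hab, card_pair_sdiff_pair hxb hab.symm⟩

lemma exists_triangle_of_star {x a b c : Fin n} (hxa : x ≠ a) (hxb : x ≠ b) (hxc : x ≠ c)
    (hab : a ≠ b) (hbc : b ≠ c) (hac : a ≠ c) (ha : IsOccurrence p π {x, a})
    (hb : IsOccurrence p π {x, b}) (hc : IsOccurrence p π {x, c}) :
    ∃ u v w : {s : Finset (Fin n) // IsOccurrence p π s},
      (OccGraph p π).Adj u v ∧ (OccGraph p π).Adj v w ∧ (OccGraph p π).Adj u w :=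
  ⟨⟨_, ha⟩, ⟨_, hb⟩, ⟨_, hc⟩, occGraph_adj_of_pairs hxa hxb hab rfl rfl,
    occGraph_adj_of_pairs hxb hxc hbc rfl rfl, occGraph_adj_of_pairs hxa hxc hac rfl rfl⟩

lemma exists_triangle_of_triple {a b c : Fin n} (hab : a ≠ b) (hbc : b ≠ c) (hac : a ≠ c)
    (hab' : IsOccurrence p π {a, b}) (hac' : IsOccurrence p π {a, c})
    (hbc' : IsOccurrence p π {b, c}) :
    ∃ u v w : {s : Finset (Fin n) // IsOccurrence p π s},
      (OccGraph p π).Adj u v ∧ (OccGraph p π).Adj v w ∧ (OccGraph p π).Adj u w :=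
  ⟨⟨_, hab'⟩, ⟨_, hac'⟩, ⟨_, hbc'⟩, occGraph_adj_of_pairs hab hac hbc rfl rfl,
    occGraph_adj_of_pairs hac.symm hbc.symm hab (pair_comm a c) (pair_comm b c),
    occGraph_adj_of_pairs hab.symm hbc hac (pair_comm a b) rfl⟩

end Triangles

theorem contains_gives_triangle (n : ℕ) (π : Equiv.Perm (Fin n))
    (h : PermContains π (Equiv.refl (Fin 3)) ∨
         PermContains π perm1432 ∨ PermContains π perm3214) :
    ∃ u v w : {s : Finset (Fin n) // IsOccurrence (Equiv.refl (Fin 2)) π s},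
      (OccGraph (Equiv.refl (Fin 2)) π).Adj u v ∧
      (OccGraph (Equiv.refl (Fin 2)) π).Adj v w ∧
      (OccGraph (Equiv.refl (Fin 2)) π).Adj u w := by
  obtain ⟨j, hj, hp⟩ | ⟨j, hj, hp⟩ | ⟨j, hj, hp⟩ := h
  · have ne : ∀ {a b : Fin 3}, a ≠ b → j a ≠ j b := hj.injective.ne
    have occ := isOccurrence_refl_two_image_pair hj hp
    exact exists_triangle_of_triple (ne (by decide)) (ne (by decide)) (ne (by decide))
      (occ 0 1 (by decide) (by decide)) (occ 0 2 (by decide) (by decide))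
      (occ 1 2 (by decide) (by decide))
  · have ne : ∀ {a b : Fin 4}, a ≠ b → j a ≠ j b := hj.injective.ne
    have occ := isOccurrence_refl_two_image_pair hj hp
    exact exists_triangle_of_star (ne (by decide)) (ne (by decide)) (ne (by decide))
      (ne (by decide)) (ne (by decide)) (ne (by decide))
      (occ 0 1 (by decide) (by decide)) (occ 0 2 (by decide) (by decide))
      (occ 0 3 (by decide) (by decide))
  · have ne : ∀ {a b : Fin 4}, a ≠ b → j a ≠ j b := hj.injective.ne
    have occ a (ha : a < 3) : IsOccurrence (Equiv.refl (Fin 2)) π {j 3, j a} := by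
      rw [pair_comm]
      exact isOccurrence_refl_two_image_pair hj hp a 3 ha (by revert a; decide)
    exact exists_triangle_of_star (ne (by decide)) (ne (by decide)) (ne (by decide))
      (ne (by decide)) (ne (by decide)) (ne (by decide))
      (occ 0 (by decide)) (occ 1 (by decide)) (occ 2 (by decide))
end

section
/- If a permutation π contains the pattern 2143, then the occurrence graph G_{12}(π) of the pattern 12 in π contains a simple cycle of length four. -/
open Finset

/-- The graph `G` has a simple cycle of length `k`. -/
def HasCycleLength {V : Type} (G : SimpleGraph V) (k : ℕ) : Prop :=
  ∃ (u : V) (w : G.Walk u u), w.IsCycle ∧ w.length = k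

/-!
An occurrence `j` of `σ` in `π` carries every occurrence of a pattern `p` in `σ` to one in `π`
(index sets are mapped along the increasing map `j`, which preserves the relative order of
values), and two occurrences differ in one element iff their images do; so `G_p(σ)` embeds in
`G_p(π)`. In `2143` the four increasing pairs made of one of the two small entries and one of
the two large entries form a `4`-cycle in `G_12(2143)`.
-/

lemma Finset.orderEmbOfFin_map {α β : Type*} [LinearOrder α] [LinearOrder β] {f : α → β}
    (hf : StrictMono f) {s : Finset α} {k : ℕ} (hs : s.card = k) (i : Fin k) :
    (s.map ⟨f, hf.injective⟩).orderEmbOfFin (by rw [card_map, hs]) i =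
      f (s.orderEmbOfFin hs i) := by
  rw [← orderEmbOfFin_unique _ (f := f ∘ s.orderEmbOfFin hs)
    (fun i => mem_map_of_mem _ (orderEmbOfFin_mem s hs i))
    (hf.comp (s.orderEmbOfFin hs).strictMono)]
  rfl

section OccurrenceTransfer

variable {k m n : ℕ} {p : Equiv.Perm (Fin k)} {σ : Equiv.Perm (Fin m)} {π : Equiv.Perm (Fin n)}
  {j : Fin m → Fin n}

lemma IsOccurrence.map (hj : StrictMono j) (hord : ∀ a b, π (j a) < π (j b) ↔ σ a < σ b)
    {s : Finset (Fin m)} (hs : IsOccurrence p σ s) :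
    IsOccurrence p π (s.map ⟨j, hj.injective⟩) := by
  obtain ⟨hcard, hpat⟩ := hs
  refine ⟨by rw [card_map, hcard], fun a b => ?_⟩
  simp only [coe_orderIsoOfFin_apply, Finset.orderEmbOfFin_map hj hcard, hord]
  exact hpat a b

def occGraphEmbedding (hj : StrictMono j) (hord : ∀ a b, π (j a) < π (j b) ↔ σ a < σ b) :
    OccGraph p σ ↪g OccGraph p π where
  toFun s := ⟨s.val.map ⟨j, hj.injective⟩, s.property.map hj hord⟩
  inj' s t hst := Subtype.ext (map_injective _ (congrArg Subtype.val hst))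
  map_rel_iff' := by
    intro s t
    change #(s.val.map _ \ t.val.map _) = 1 ∧ #(t.val.map _ \ s.val.map _) = 1 ↔ _
    simp only [← Finset.map_sdiff, card_map]
    rfl

end OccurrenceTransfer

lemma HasCycleLength.map {V W : Type} {G : SimpleGraph V} {H : SimpleGraph W} (f : G ↪g H)
    {k : ℕ} (hG : HasCycleLength G k) : HasCycleLength H k := by
  obtain ⟨u, w, hw, hlen⟩ := hG
  exact ⟨f u, w.map f.toHom, hw.map f.injective, by rw [SimpleGraph.Walk.length_map, hlen]⟩

lemma PermContains.hasCycleLength_occGraph {k m n : ℕ} {p : Equiv.Perm (Fin k)}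
    {σ : Equiv.Perm (Fin m)} {π : Equiv.Perm (Fin n)} (h : PermContains π σ) {l : ℕ}
    (hσ : HasCycleLength (OccGraph p σ) l) : HasCycleLength (OccGraph p π) l := by
  obtain ⟨j, hj, hord⟩ := h
  exact hσ.map (occGraphEmbedding hj hord)

lemma hasCycleLength_four_of_adj {V : Type} {G : SimpleGraph V} {a b c d : V}
    (hab : G.Adj a b) (hbc : G.Adj b c) (hcd : G.Adj c d) (hda : G.Adj d a)
    (hac : a ≠ c) (hbd : b ≠ d) : HasCycleLength G 4 := by
  classical
  refine ⟨a, .cons hab (.cons hbc (.cons hcd (.cons hda .nil))), ?_, rfl⟩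
  simp [SimpleGraph.Walk.cons_isCycle_iff, hab.ne, hbc.ne, hcd.ne, hda.ne, hab.ne.symm,
    hda.ne.symm, hac, hbd, hac.symm]

lemma isOccurrence_refl_pair {n : ℕ} (π : Equiv.Perm (Fin n)) {a b : Fin n} (hab : a < b)
    (hπ : π a < π b) : IsOccurrence (Equiv.refl (Fin 2)) π {a, b} := by
  have hcard : ({a, b} : Finset (Fin n)).card = 2 := card_pair hab.ne
  have hsorted : ![a, b] = orderEmbOfFin {a, b} hcard :=
    orderEmbOfFin_unique hcard (by simp [Fin.forall_fin_two])
      (Fin.strictMono_iff_lt_succ.2 (by simp [Fin.forall_fin_one, hab]))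
  refine ⟨hcard, fun x y => ?_⟩
  simp only [coe_orderIsoOfFin_apply, ← hsorted]
  fin_cases x <;> fin_cases y <;> simp [hπ, hπ.not_gt]

lemma hasCycleLength_occGraph_perm2143 :
    HasCycleLength (OccGraph (Equiv.refl (Fin 2)) perm2143) 4 :=
  hasCycleLength_four_of_adj (a := ⟨{0, 2}, isOccurrence_refl_pair _ (by decide) (by decide)⟩)
    (b := ⟨{0, 3}, isOccurrence_refl_pair _ (by decide) (by decide)⟩)
    (c := ⟨{1, 3}, isOccurrence_refl_pair _ (by decide) (by decide)⟩)
    (d := ⟨{1, 2}, isOccurrence_refl_pair _ (by decide) (by decide)⟩)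
    ⟨by decide, by decide⟩ ⟨by decide, by decide⟩ ⟨by decide, by decide⟩ ⟨by decide, by decide⟩
    (by decide) (by decide)

theorem contains2143_gives_fourcycle (n : ℕ) (π : Equiv.Perm (Fin n))
    (h : PermContains π perm2143) :
    HasCycleLength (OccGraph (Equiv.refl (Fin 2)) π) 4 :=
  h.hasCycleLength_occGraph hasCycleLength_occGraph_perm2143
end
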